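/- If f : ℝ → E is almost periodic, then the Bohr spectrum σ(f) = {r ∈ ℝ : P_r(f) ≠ 0} is at most countable. -/

import Mathlib

open Filter Topology intervalIntegral MeasureTheory


lemma expMean (l : ℝ) :
    Tendsto (fun t : ℝ => t⁻¹ • ∫ s in (0:ℝ)..t, Complex.exp (Complex.I * l * s))
      atTop (𝓝 (if l = 0 then 1 else 0)) := by
  rcases eq_or_ne l 0 with rfl | hl
  · simp only [if_pos rfl]
    have : ∀ᶠ t : ℝ in atTop, t⁻¹ • (∫ s in (0:ℝ)..t, Complex.exp (Complex.I * 0 * s)) = 1 := by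
      filter_upwards [eventually_gt_atTop (0:ℝ)] with t ht
      simp [Complex.exp_zero, mul_comm, Complex.ofReal_ne_zero, ne_of_gt ht]
    exact Tendsto.congr' (this.mono fun t h => h.symm) tendsto_const_nhds
  · simp only [if_neg hl]
    have key : ∀ t : ℝ, (∫ s in (0:ℝ)..t, Complex.exp (Complex.I * l * s)) =
        (Complex.I * l)⁻¹ * Complex.exp (Complex.I * l * t) - (Complex.I * l)⁻¹ := by
      intro t
      have hd : ∀ s ∈ Set.uIcc (0:ℝ) t, HasDerivAt
          (fun u : ℝ => (Complex.I * l)⁻¹ * Complex.exp (Complex.I * l * u))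
          (Complex.exp (Complex.I * l * s)) s := by
        intro s _
        have h1 : HasDerivAt (fun u : ℝ => Complex.I * l * u) (Complex.I * l) s := by
          simpa using ((hasDerivAt_id (s:ℂ)).const_mul (Complex.I * l)).comp_ofReal
        have h2 := (h1.cexp).const_mul ((Complex.I * l)⁻¹)
        have hne : Complex.I * l ≠ 0 := by
          simp [Complex.I_ne_zero, Complex.ofReal_ne_zero, hl]
        exact h2.congr_deriv (by
          rw [mul_comm (Complex.exp _), ← mul_assoc, inv_mul_cancel₀ hne, one_mul])
      have hint : IntervalIntegrable (fun s : ℝ => Complex.exp (Complex.I * l * s))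
          MeasureTheory.volume 0 t := by
        apply Continuous.intervalIntegrable
        continuity
      have := intervalIntegral.integral_eq_sub_of_hasDerivAt hd hint
      simpa [Complex.exp_zero, mul_one] using this
    have hb : Tendsto (fun t : ℝ => t⁻¹ * (2 / ‖Complex.I * (l:ℂ)‖))
        atTop (𝓝 0) := by
      simpa using tendsto_inv_atTop_zero.mul_const (2 / ‖Complex.I * (l:ℂ)‖)
    rw [show (0:ℂ) = 0 from rfl]
    apply squeeze_zero_norm' _ hb
    filter_upwards [eventually_gt_atTop (0:ℝ)] with t ht
    rw [key t]
    have h1 : ‖(Complex.I * l)⁻¹ * Complex.exp (Complex.I * l * t) - (Complex.I * l)⁻¹‖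
        ≤ 2 / ‖Complex.I * (l:ℂ)‖ := by
      have habs : ‖Complex.exp (Complex.I * l * t)‖ = 1 := by
        rw [Complex.norm_exp]
        simp [mul_assoc, ← Complex.ofReal_mul]
      calc ‖(Complex.I * l)⁻¹ * Complex.exp (Complex.I * l * t) - (Complex.I * l)⁻¹‖
          ≤ ‖(Complex.I * l)⁻¹ * Complex.exp (Complex.I * l * t)‖ + ‖(Complex.I * l)⁻¹‖ :=
            norm_sub_le _ _
        _ ≤ 2 / ‖Complex.I * (l:ℂ)‖ := by
            rw [norm_mul]
            simp only [norm_inv, habs, mul_one]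
            rw [div_eq_mul_inv]
            nlinarith [inv_nonneg.mpr (norm_nonneg (Complex.I * (l:ℂ)))]
    calc ‖t⁻¹ • ((Complex.I * l)⁻¹ * Complex.exp (Complex.I * l * t) - (Complex.I * l)⁻¹)‖
        = |t⁻¹| * ‖(Complex.I * l)⁻¹ * Complex.exp (Complex.I * l * t) - (Complex.I * l)⁻¹‖ := by
          rw [norm_smul]; rfl
      _ ≤ t⁻¹ * (2 / ‖Complex.I * (l:ℂ)‖) := by
          rw [abs_of_pos (inv_pos.mpr ht)]
          exact mul_le_mul_of_nonneg_left h1 (le_of_lt (inv_pos.mpr ht))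

lemma contExpAux (a : ℂ) : Continuous fun s : ℝ => Complex.exp (a * s) :=
  Complex.continuous_exp.comp (continuous_const.mul Complex.continuous_ofReal)

lemma intervalIntegral_conj (h : ℝ → ℂ) (a b : ℝ) :
    (∫ s in a..b, (starRingEnd ℂ) (h s)) = (starRingEnd ℂ) (∫ s in a..b, h s) := by
  unfold intervalIntegral
  simp only [map_sub, integral_conj]

lemma bessel {C : ℝ} {g : ℝ → ℂ} (hg : Continuous g) (hgC : ∀ s, ‖g s‖ ≤ C)
    (F : Finset ℝ) (c : ℝ → ℂ)
    (hc : ∀ r ∈ F, Tendsto (fun t : ℝ => t⁻¹ •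
        ∫ s in (0:ℝ)..t, Complex.exp (-(Complex.I * r * s)) • g s) atTop (𝓝 (c r))) :
    ∑ r ∈ F, ‖c r‖ ^ 2 ≤ C ^ 2 := by
  classical
  set K := starRingEnd ℂ with hK_def
  set p : ℝ → ℂ := fun s => ∑ r ∈ F, c r * Complex.exp (Complex.I * r * s) with hp_def
  have hp : Continuous p := by
    apply continuous_finset_sum
    intro r _
    exact continuous_const.mul (contExpAux (Complex.I * r))
  set B : ℝ → ℂ := fun t => ∑ r ∈ F, K (c r) *
      (t⁻¹ • ∫ s in (0:ℝ)..t, Complex.exp (-(Complex.I * r * s)) • g s) with hB_def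
  set D : ℝ → ℂ := fun t => ∑ r ∈ F, ∑ q ∈ F, (c r * K (c q)) *
      (t⁻¹ • ∫ s in (0:ℝ)..t, Complex.exp (Complex.I * ((r - q : ℝ)) * s)) with hD_def
  have hCpos : (0:ℝ) ≤ C := le_trans (norm_nonneg _) (hgC 0)
  -- limits
  set L : ℂ := ((∑ r ∈ F, Complex.normSq (c r) : ℝ) : ℂ) with hL_def
  have hLK : ∑ r ∈ F, K (c r) * c r = L := by
    rw [hL_def]
    push_cast
    refine Finset.sum_congr rfl fun r _ => ?_
    rw [mul_comm, Complex.mul_conj]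
  have hLK' : ∑ r ∈ F, c r * K (c r) = L := by
    rw [← hLK]
    exact Finset.sum_congr rfl fun r _ => mul_comm _ _
  have hB_lim : Tendsto B atTop (𝓝 L) := by
    rw [← hLK]
    exact tendsto_finset_sum _ fun r hr => (hc r hr).const_mul (K (c r))
  have hD_lim : Tendsto D atTop (𝓝 L) := by
    rw [← hLK']
    apply tendsto_finset_sum
    intro r hr
    have h1 := tendsto_finset_sum F
      (fun q (_ : q ∈ F) => ((expMean (r - q)).const_mul (c r * K (c q))))
    have h2 : ∀ q ∈ F, (c r * K (c q)) * (if (r - q : ℝ) = 0 then (1:ℂ) else 0) =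
        if q = r then c r * K (c q) else 0 := by
      intro q _
      by_cases h : q = r
      · simp [h]
      · rw [if_neg (by simpa [sub_eq_zero] using Ne.symm h), if_neg h, mul_zero]
    rw [Finset.sum_congr rfl h2, Finset.sum_ite_eq' F r (fun q => c r * K (c q)),
      if_pos hr] at h1
    exact h1
  have hKB_lim : Tendsto (fun t => K (B t)) atTop (𝓝 (K L)) :=
    ((RCLike.continuous_conj (K := ℂ)).tendsto L).comp hB_lim
  have hKL : K L = L := by rw [hL_def]; exact Complex.conj_ofReal _
  have hBD : Tendsto (fun t => (B t + K (B t) - D t).re) atTop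
      (𝓝 (∑ r ∈ F, Complex.normSq (c r))) := by
    have h := ((hB_lim.add hKB_lim).sub hD_lim)
    rw [hKL] at h
    have := (Complex.continuous_re.tendsto _).comp h
    simpa [hL_def, Function.comp_def] using this
  -- eventual bound
  have hev : ∀ᶠ t : ℝ in atTop, (B t + K (B t) - D t).re ≤ C ^ 2 := by
    filter_upwards [eventually_gt_atTop (0:ℝ)] with t ht
    have intg : ∀ (h : ℝ → ℂ), Continuous h → IntervalIntegrable h volume 0 t :=
      fun h hh => hh.intervalIntegrable _ _
    -- B t as single integral
    have hB_eq : B t = t⁻¹ • ∫ s in (0:ℝ)..t, g s * K (p s) := by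
      have hpt : ∀ s : ℝ, g s * K (p s) =
          ∑ r ∈ F, K (c r) * (Complex.exp (-(Complex.I * r * s)) • g s) := by
        intro s
        rw [hp_def]
        simp only [map_sum, Finset.mul_sum, map_mul, smul_eq_mul]
        refine Finset.sum_congr rfl fun r _ => ?_
        rw [← Complex.exp_conj]
        have : (K : ℂ →+* ℂ) (Complex.I * r * s) = -(Complex.I * r * s) := by
          simp [hK_def, map_mul, Complex.conj_I, Complex.conj_ofReal]
        rw [this]
        ring
      rw [hB_def]
      simp only [hpt]
      rw [intervalIntegral.integral_finset_sum (fun r _ => by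
        exact intg _ (continuous_const.mul
          ((contExpAux (-(Complex.I * r))).congr (fun s => by ring_nf) |>.mul hg)))]
      rw [Finset.smul_sum]
      refine Finset.sum_congr rfl fun r _ => ?_
      rw [intervalIntegral.integral_const_mul, mul_smul_comm]
    have hKB_eq : K (B t) = t⁻¹ • ∫ s in (0:ℝ)..t, p s * K (g s) := by
      rw [hB_eq, Complex.real_smul, map_mul, Complex.conj_ofReal, ← _root_.intervalIntegral_conj,
        ← Complex.real_smul]
      have h7 : ∀ s : ℝ, (starRingEnd ℂ) (g s * K (p s)) = p s * K (g s) := fun s => by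
        rw [map_mul]
        have : (starRingEnd ℂ) (K (p s)) = p s := Complex.conj_conj _
        rw [this]; ring
      simp only [h7]
    have hD_eq : D t = t⁻¹ • ∫ s in (0:ℝ)..t, p s * K (p s) := by
      have hpt : ∀ s : ℝ, p s * K (p s) = ∑ r ∈ F, ∑ q ∈ F,
          (c r * K (c q)) * Complex.exp (Complex.I * ((r - q : ℝ)) * s) := by
        intro s
        rw [hp_def]
        simp only [map_sum, map_mul, Finset.sum_mul, Finset.mul_sum]
        conv_rhs => rw [Finset.sum_comm]
        refine Finset.sum_congr rfl fun r _ => Finset.sum_congr rfl fun q _ => ?_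
        rw [← Complex.exp_conj]
        have h1 : (starRingEnd ℂ) (Complex.I * r * s) = -(Complex.I * r * s) := by
          simp [map_mul, Complex.conj_I, Complex.conj_ofReal]
        rw [h1]
        have h2 : Complex.exp (Complex.I * q * s) * Complex.exp (-(Complex.I * r * s)) =
            Complex.exp (Complex.I * ((q - r : ℝ)) * s) := by
          rw [← Complex.exp_add]; congr 1; push_cast; ring
        calc c q * Complex.exp (Complex.I * q * s) * (K (c r) * Complex.exp (-(Complex.I * r * s)))
            = (c q * K (c r)) * (Complex.exp (Complex.I * q * s) *
              Complex.exp (-(Complex.I * r * s))) := by ring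
          _ = (c q * K (c r)) * Complex.exp (Complex.I * ((q - r : ℝ)) * s) := by rw [h2]
      rw [hD_def]
      simp only [hpt]
      rw [intervalIntegral.integral_finset_sum (fun r _ => by
        exact intg _ (continuous_finset_sum _ (fun q _ =>
          continuous_const.mul (contExpAux (Complex.I * ((r - q : ℝ))) |>.congr
            (fun s => by ring_nf)))))]
      rw [Finset.smul_sum]
      refine Finset.sum_congr rfl fun r _ => ?_
      rw [intervalIntegral.integral_finset_sum (f := fun q s => c r * K (c q) *
          Complex.exp (Complex.I * ((r - q : ℝ)) * s)) (fun q _ =>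
          intg _ (continuous_const.mul (contExpAux (Complex.I * ((r - q : ℝ))) |>.congr
            (fun s => by ring_nf)))), Finset.smul_sum]
      exact Finset.sum_congr rfl fun q _ => by
        rw [intervalIntegral.integral_const_mul, mul_smul_comm]
    -- combine
    have int1 : IntervalIntegrable (fun s => g s * K (p s)) volume 0 t :=
      intg _ (hg.mul (RCLike.continuous_conj.comp hp))
    have int2 : IntervalIntegrable (fun s => p s * K (g s)) volume 0 t :=
      intg _ (hp.mul (RCLike.continuous_conj.comp hg))
    have int3 : IntervalIntegrable (fun s => p s * K (p s)) volume 0 t :=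
      intg _ (hp.mul (RCLike.continuous_conj.comp hp))
    have int4 : IntervalIntegrable (fun s => g s * K (g s)) volume 0 t :=
      intg _ (hg.mul (RCLike.continuous_conj.comp hg))
    have int5 : IntervalIntegrable (fun s => (g s - p s) * K (g s - p s)) volume 0 t :=
      intg _ ((hg.sub hp).mul (RCLike.continuous_conj.comp (hg.sub hp)))
    have hcomb : B t + K (B t) - D t =
        t⁻¹ • ((∫ s in (0:ℝ)..t, g s * K (g s)) -
          ∫ s in (0:ℝ)..t, (g s - p s) * K (g s - p s)) := by
      rw [hKB_eq, hD_eq, hB_eq, ← smul_add, ← smul_sub]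
      congr 1
      rw [← intervalIntegral.integral_add int1 int2,
        ← intervalIntegral.integral_sub (int1.add int2) int3,
        ← intervalIntegral.integral_sub int4 int5]
      apply intervalIntegral.integral_congr
      intro s _
      simp only [map_sub]
      ring
    have h5 : (∫ s in (0:ℝ)..t, g s * K (g s)) =
        ((∫ s in (0:ℝ)..t, Complex.normSq (g s) : ℝ) : ℂ) := by
      rw [← intervalIntegral.integral_ofReal]
      exact intervalIntegral.integral_congr fun s _ => Complex.mul_conj _
    have h6 : (∫ s in (0:ℝ)..t, (g s - p s) * K (g s - p s)) =
        ((∫ s in (0:ℝ)..t, Complex.normSq (g s - p s) : ℝ) : ℂ) := by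
      rw [← intervalIntegral.integral_ofReal]
      exact intervalIntegral.integral_congr fun s _ => Complex.mul_conj _
    rw [hcomb, h5, h6, ← Complex.ofReal_sub]
    have hre : (t⁻¹ • (((∫ s in (0:ℝ)..t, Complex.normSq (g s)) -
        ∫ s in (0:ℝ)..t, Complex.normSq (g s - p s) : ℝ) : ℂ)).re =
        t⁻¹ * ((∫ s in (0:ℝ)..t, Complex.normSq (g s)) -
          ∫ s in (0:ℝ)..t, Complex.normSq (g s - p s)) := by
      rw [Complex.real_smul, ← Complex.ofReal_mul, Complex.ofReal_re]
    rw [hre]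
    have hR2 : (0:ℝ) ≤ ∫ s in (0:ℝ)..t, Complex.normSq (g s - p s) :=
      intervalIntegral.integral_nonneg (le_of_lt ht) fun s _ => Complex.normSq_nonneg _
    have hR1 : (∫ s in (0:ℝ)..t, Complex.normSq (g s)) ≤ C ^ 2 * t := by
      have : ∀ s ∈ Set.Icc (0:ℝ) t, Complex.normSq (g s) ≤ C ^ 2 := by
        intro s _
        rw [← Complex.sq_norm]
        exact pow_le_pow_left₀ (norm_nonneg _) (hgC s) 2
      calc (∫ s in (0:ℝ)..t, Complex.normSq (g s)) ≤ ∫ _ in (0:ℝ)..t, C ^ 2 :=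
            intervalIntegral.integral_mono_on (le_of_lt ht)
              ((Complex.continuous_normSq.comp hg).intervalIntegrable _ _)
              intervalIntegrable_const this
        _ = C ^ 2 * t := by rw [intervalIntegral.integral_const, smul_eq_mul]; ring
    nlinarith [mul_le_mul_of_nonneg_left hR1 (le_of_lt (inv_pos.mpr ht)),
      mul_inv_cancel₀ (ne_of_gt ht), mul_nonneg (inv_pos.mpr ht).le hR2]
  have hfinal := le_of_tendsto hBD hev
  calc ∑ r ∈ F, ‖c r‖ ^ 2 = ∑ r ∈ F, Complex.normSq (c r) :=
      Finset.sum_congr rfl fun r _ => by rw [← Complex.sq_norm]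
    _ ≤ C ^ 2 := hfinal

lemma scalar_countable {C : ℝ} {g : ℝ → ℂ} (hg : Continuous g) (hgC : ∀ s, ‖g s‖ ≤ C) :
    Set.Countable {r : ℝ | ∃ z : ℂ, z ≠ 0 ∧ Tendsto (fun t : ℝ => t⁻¹ •
      ∫ s in (0:ℝ)..t, Complex.exp (-(Complex.I * r * s)) • g s) atTop (𝓝 z)} := by
  classical
  have hsub : {r : ℝ | ∃ z : ℂ, z ≠ 0 ∧ Tendsto (fun t : ℝ => t⁻¹ •
      ∫ s in (0:ℝ)..t, Complex.exp (-(Complex.I * r * s)) • g s) atTop (𝓝 z)} ⊆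
      ⋃ n : ℕ, {r : ℝ | ∃ z : ℂ, ((n:ℝ) + 1)⁻¹ ≤ ‖z‖ ∧ Tendsto (fun t : ℝ => t⁻¹ •
        ∫ s in (0:ℝ)..t, Complex.exp (-(Complex.I * r * s)) • g s) atTop (𝓝 z)} := by
    rintro r ⟨z, hz, hlim⟩
    obtain ⟨n, hn⟩ := exists_nat_one_div_lt (norm_pos_iff.mpr hz)
    exact Set.mem_iUnion.mpr ⟨n, ⟨z, by rw [one_div] at hn; exact le_of_lt hn, hlim⟩⟩
  refine Set.Countable.mono hsub (Set.countable_iUnion fun n => Set.Finite.countable ?_)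
  set T := {r : ℝ | ∃ z : ℂ, ((n:ℝ) + 1)⁻¹ ≤ ‖z‖ ∧ Tendsto (fun t : ℝ => t⁻¹ •
        ∫ s in (0:ℝ)..t, Complex.exp (-(Complex.I * r * s)) • g s) atTop (𝓝 z)} with hT
  by_contra hinf
  replace hinf : T.Infinite := hinf
  set N : ℕ := ⌈((n:ℝ) + 1) ^ 2 * C ^ 2⌉₊ + 1 with hN
  obtain ⟨F, hFsub, hFcard⟩ := Set.Infinite.exists_subset_card_eq hinf N
  set c : ℝ → ℂ := fun r => if h : ∃ z : ℂ, ((n:ℝ) + 1)⁻¹ ≤ ‖z‖ ∧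
      Tendsto (fun t : ℝ => t⁻¹ •
        ∫ s in (0:ℝ)..t, Complex.exp (-(Complex.I * r * s)) • g s) atTop (𝓝 z)
    then h.choose else 0 with hc_def
  have hcprop : ∀ r ∈ F, ((n:ℝ) + 1)⁻¹ ≤ ‖c r‖ ∧ Tendsto (fun t : ℝ => t⁻¹ •
      ∫ s in (0:ℝ)..t, Complex.exp (-(Complex.I * r * s)) • g s) atTop (𝓝 (c r)) := by
    intro r hr
    have hmem : r ∈ T := hFsub hr
    rw [hT] at hmem
    have hcr : c r = hmem.choose := by rw [hc_def]; exact dif_pos hmem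
    rw [hcr]
    exact hmem.choose_spec
  have hbes := bessel hg hgC F c (fun r hr => (hcprop r hr).2)
  have hlow : (N : ℝ) * (((n:ℝ) + 1)⁻¹) ^ 2 ≤ ∑ r ∈ F, ‖c r‖ ^ 2 := by
    calc (N : ℝ) * (((n:ℝ) + 1)⁻¹) ^ 2 = ∑ _r ∈ F, (((n:ℝ) + 1)⁻¹) ^ 2 := by
          rw [Finset.sum_const, hFcard, nsmul_eq_mul]
      _ ≤ ∑ r ∈ F, ‖c r‖ ^ 2 := Finset.sum_le_sum fun r hr =>
          pow_le_pow_left₀ (by positivity) (hcprop r hr).1 2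
  have hn1 : (0:ℝ) < (n:ℝ) + 1 := by positivity
  have hceil : ((n:ℝ) + 1) ^ 2 * C ^ 2 < (N : ℝ) := by
    rw [hN]
    push_cast
    have := Nat.le_ceil (((n:ℝ) + 1) ^ 2 * C ^ 2)
    linarith
  have : (N : ℝ) * (((n:ℝ) + 1)⁻¹) ^ 2 ≤ C ^ 2 := le_trans hlow hbes
  rw [inv_pow] at this
  have h2 : (N : ℝ) ≤ ((n:ℝ) + 1) ^ 2 * C ^ 2 := by
    have hpos : (0:ℝ) < ((n:ℝ) + 1) ^ 2 := by positivity
    rw [mul_inv_le_iff₀ hpos] at this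
    linarith [this]
  linarith

def AlmostPeriodic {E : Type*} [NormedAddCommGroup E] (f : ℝ → E) : Prop :=
  Continuous f ∧ ∀ ε > (0:ℝ), ∃ l > (0:ℝ), ∀ a : ℝ, ∃ τ ∈ Set.Icc a (a + l),
    ∀ t : ℝ, ‖f (t + τ) - f t‖ ≤ ε

lemma ap_bounded {E : Type*} [NormedAddCommGroup E] {f : ℝ → E} (hf : AlmostPeriodic f) :
    ∃ C : ℝ, ∀ t, ‖f t‖ ≤ C := by
  obtain ⟨hcont, hap⟩ := hf
  obtain ⟨l, hl, h⟩ := hap 1 one_pos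
  obtain ⟨M, _, hMax'⟩ := (isCompact_Icc (a := (0:ℝ)) (b := l)).exists_isMaxOn
    ⟨0, le_refl 0, le_of_lt hl⟩ hcont.norm.continuousOn
  have hMax : ∀ y ∈ Set.Icc (0:ℝ) l, ‖f y‖ ≤ ‖f M‖ := fun y hy => hMax' hy
  refine ⟨‖f M‖ + 1, fun t => ?_⟩
  obtain ⟨τ, hτ, hb⟩ := h (-t)
  have h1 : t + τ ∈ Set.Icc (0:ℝ) l := ⟨by linarith [hτ.1], by linarith [hτ.2]⟩
  have h2 := hb t
  have h3 : ‖f t‖ ≤ ‖f (t + τ)‖ + ‖f (t + τ) - f t‖ := by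
    calc ‖f t‖ = ‖f (t + τ) - (f (t + τ) - f t)‖ := by rw [sub_sub_cancel]
      _ ≤ ‖f (t + τ)‖ + ‖f (t + τ) - f t‖ := norm_sub_le _ _
  linarith [hMax (t + τ) h1]

/-- The Bohr spectrum `σ(f) = {r : P_r(f) ≠ 0}` of an almost periodic function is at most
countable. -/
theorem stmt8 {E : Type*} [NormedAddCommGroup E] [NormedSpace ℂ E] [CompleteSpace E]
    (f : ℝ → E) (hf : AlmostPeriodic f) :
    Set.Countable {r : ℝ | ∃ P : E, P ≠ 0 ∧
      Tendsto (fun t : ℝ => (t : ℝ)⁻¹ •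
        ∫ s in (0:ℝ)..t, Complex.exp (-(Complex.I * r * s)) • f s) atTop (𝓝 P)} := by
  classical
  obtain ⟨C, hC⟩ := ap_bounded hf
  have hcont := hf.1
  set S := (Submodule.span ℂ (Set.range f)).topologicalClosure with hS
  have hSc : IsClosed (S : Set E) := Submodule.isClosed_topologicalClosure _
  have hSsep : TopologicalSpace.IsSeparable (S : Set E) :=
    (TopologicalSpace.isSeparable_range hcont).span (R := ℂ) |>.closure
  obtain ⟨cset, hc_count, hc_dense⟩ := hSsep
  choose φ hφ1 hφ2 using fun x : E => exists_dual_vector'' ℂ x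
  have hexpc : ∀ r : ℝ, Continuous fun s : ℝ => Complex.exp (-(Complex.I * r * s)) :=
    fun r => (contExpAux (-(Complex.I * r))).congr (fun s => by ring_nf)
  have hmemS : ∀ (r t : ℝ),
      (t⁻¹ • ∫ s in (0:ℝ)..t, Complex.exp (-(Complex.I * r * s)) • f s) ∈ S := by
    intro r t
    have hmem : ∀ s : ℝ, Complex.exp (-(Complex.I * r * s)) • f s ∈ S := fun s =>
      Submodule.smul_mem _ _ ((Submodule.le_topologicalClosure _) (Submodule.subset_span ⟨s, rfl⟩))
    have : CompleteSpace S := hSc.completeSpace_coe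
    set g0 : ℝ → S := fun s => ⟨Complex.exp (-(Complex.I * r * s)) • f s, hmem s⟩ with hg0
    have hg0c : Continuous g0 := Continuous.subtype_mk ((hexpc r).smul hcont) _
    have hkey : (∫ s in (0:ℝ)..t, Complex.exp (-(Complex.I * r * s)) • f s)
        = (S.subtypeL (∫ s in (0:ℝ)..t, g0 s) : E) := by
      rw [← ContinuousLinearMap.intervalIntegral_comp_comm _ (hg0c.intervalIntegrable _ _)]
      rfl
    rw [hkey]
    exact Submodule.smul_of_tower_mem _ _ (∫ s in (0:ℝ)..t, g0 s).2
  have hCount : Set.Countable (⋃ x ∈ cset, {r : ℝ | ∃ z : ℂ, z ≠ 0 ∧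
      Tendsto (fun t : ℝ => t⁻¹ •
        ∫ s in (0:ℝ)..t, Complex.exp (-(Complex.I * r * s)) • (φ x (f s))) atTop (𝓝 z)}) := by
    refine hc_count.biUnion fun x _ => ?_
    refine scalar_countable (C := C) ((φ x).continuous.comp hcont) (fun s => ?_)
    calc ‖φ x (f s)‖ ≤ ‖φ x‖ * ‖f s‖ := (φ x).le_opNorm _
      _ ≤ 1 * C := mul_le_mul (hφ1 x) (hC s) (norm_nonneg _) zero_le_one
      _ = C := one_mul C
  refine Set.Countable.mono ?_ hCount
  rintro r ⟨P, hP, hlim⟩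
  have hPS : P ∈ S := hSc.mem_of_tendsto hlim (Eventually.of_forall fun t => hmemS r t)
  have hPnorm : (0:ℝ) < ‖P‖ := norm_pos_iff.mpr hP
  have hPcl : P ∈ closure cset := hc_dense hPS
  obtain ⟨x, hxc, hxd⟩ := Metric.mem_closure_iff.mp hPcl (‖P‖ / 3) (by linarith)
  have hxP : ‖x - P‖ < ‖P‖ / 3 := by
    rw [← dist_eq_norm, dist_comm]
    exact hxd
  have hxn : ‖P‖ - ‖P‖ / 3 ≤ ‖x‖ := by
    have := norm_sub_norm_le P x
    rw [← dist_eq_norm] at this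
    linarith
  have hz : φ x P ≠ 0 := by
    rw [← norm_pos_iff]
    have h1 : ‖φ x x‖ - ‖φ x (x - P)‖ ≤ ‖φ x P‖ := by
      have := norm_sub_norm_le (φ x x) (φ x (x - P))
      rw [← map_sub, sub_sub_cancel] at this
      linarith
    have h2 : ‖φ x x‖ = ‖x‖ := by rw [hφ2 x]; simp
    have h3 : ‖φ x (x - P)‖ ≤ ‖x - P‖ := by
      calc ‖φ x (x - P)‖ ≤ ‖φ x‖ * ‖x - P‖ := (φ x).le_opNorm _
        _ ≤ 1 * ‖x - P‖ := mul_le_mul_of_nonneg_right (hφ1 x) (norm_nonneg _)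
        _ = ‖x - P‖ := one_mul _
    linarith
  refine Set.mem_biUnion hxc ⟨φ x P, hz, ?_⟩
  have hcomp := ((φ x).continuous.tendsto P).comp hlim
  refine hcomp.congr fun t => ?_
  show φ x (t⁻¹ • ∫ s in (0:ℝ)..t, Complex.exp (-(Complex.I * r * s)) • f s) = _
  rw [(φ x).map_smul_of_tower, ← ContinuousLinearMap.intervalIntegral_comp_comm _
    (f := fun s => Complex.exp (-(Complex.I * r * s)) • f s) (((hexpc r).smul hcont).intervalIntegrable _ _)]
  congr 1
  apply intervalIntegral.integral_congr
  intro s _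
  exact map_smul _ _ _
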